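/- Let R be an s-unital ring and a ∈ R a nonzero element. Then a is properly infinite if and only if for every two-sided ideal I of R, the coset a + I is either zero or an infinite element of the quotient ring R/I. -/
import Mathlib


/-- `x ≼ y` for square matrices over a (possibly nonunital) ring: `x = α * y * β`
for some rectangular matrices `α`, `β`. -/
def MatSub {R : Type*} [NonUnitalRing R] {k n : ℕ}
    (x : Matrix (Fin k) (Fin k) R) (y : Matrix (Fin n) (Fin n) R) : Prop :=
  ∃ (α : Matrix (Fin k) (Fin n) R) (β : Matrix (Fin n) (Fin k) R), x = α * y * β

/-- `a ⊕ b ≼ c` for ring elements: the block-diagonal matrix `diag(a, b)` satisfies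
`diag(a,b) ≼ (c)` as square matrices. -/
def PairSub {R : Type*} [NonUnitalRing R] (a b c : R) : Prop :=
  MatSub !![a, 0; 0, b] !![c]

/-- `a ≼ b` for ring elements: `a = α * b * β` for some ring elements. -/
def ElemSub {R : Type*} [NonUnitalRing R] (a b : R) : Prop :=
  ∃ α β : R, a = α * b * β

/-- `K(a) = { x | a ⊕ x ≼ a }`. -/
def KSet {R : Type*} [NonUnitalRing R] (a : R) : Set R := { x | PairSub a x a }

/-- An element `a` is infinite if `a ⊕ x ≼ a` for some nonzero `x`, i.e. `K(a) ≠ 0`. -/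
def IsInfiniteElem {R : Type*} [NonUnitalRing R] (a : R) : Prop :=
  ∃ x : R, x ≠ 0 ∧ PairSub a x a

/-- An element `a` is properly infinite if `a ≠ 0` and `a ⊕ a ≼ a`. -/
def IsProperlyInfiniteElem {R : Type*} [NonUnitalRing R] (a : R) : Prop :=
  a ≠ 0 ∧ PairSub a a a

/-- A ring is s-unital if each element `x` admits `u, v` with `u * x = x` and `x * v = x`. -/
def IsSUnitalRing (R : Type*) [NonUnitalRing R] : Prop :=
  ∀ x : R, (∃ u : R, u * x = x) ∧ (∃ v : R, x * v = x)

/-- `b` belongs to `RaR`, the set of finite sums `Σ xᵢ * a * yᵢ`. -/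
def MemRaR {R : Type*} [NonUnitalRing R] (a b : R) : Prop :=
  ∃ (n : ℕ) (x y : Fin n → R), b = ∑ i, x i * a * y i

/-- A (possibly nonunital) ring is a division ring: it has a nonzero multiplicative identity
with respect to which every nonzero element is two-sided invertible. -/
def IsDivisionRingPred (R : Type*) [NonUnitalRing R] : Prop :=
  ∃ u : R, u ≠ 0 ∧ (∀ x : R, u * x = x ∧ x * u = x) ∧
    ∀ x : R, x ≠ 0 → ∃ y : R, x * y = u ∧ y * x = u

/-- A ring `R` is purely infinite if no quotient of `R` by a two-sided ideal is a division
ring, and `b ∈ RaR` implies `b = x * a * y` for some `x, y ∈ R`. -/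
def IsPurelyInfiniteRing (R : Type*) [NonUnitalRing R] : Prop :=
  (∀ I : TwoSidedIdeal R, ¬ IsDivisionRingPred I.ringCon.Quotient) ∧
  ∀ a b : R, MemRaR a b → ElemSub b a

/-- A ring is properly purely infinite if every nonzero element is properly infinite. -/
def IsProperlyPurelyInfiniteRing (R : Type*) [NonUnitalRing R] : Prop :=
  ∀ a : R, a ≠ 0 → IsProperlyInfiniteElem a

/-- An idempotent `e` is infinite if `e ∼ f ≤ e` for some idempotent `f ≠ e`. -/
def IsInfiniteIdem {R : Type*} [NonUnitalRing R] (e : R) : Prop :=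
  IsIdempotentElem e ∧ ∃ f : R, IsIdempotentElem f ∧ (∃ x y : R, e = x * y ∧ f = y * x) ∧
    e * f = f ∧ f * e = f ∧ f ≠ e

/-- An exchange ring: for each `x` there are an idempotent `e` and elements `r, s` with
`e = x * r = x + s - x * s`. -/
def IsExchangeRing (R : Type*) [NonUnitalRing R] : Prop :=
  ∀ x : R, ∃ e r s : R, IsIdempotentElem e ∧ e = x * r ∧ e = x + s - x * s

/-- A ring has local units if every finite subset is contained in a corner `eRe`
for some idempotent `e`. -/
def HasLocalUnits (R : Type*) [NonUnitalRing R] : Prop :=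
  ∀ s : Finset R, ∃ e : R, IsIdempotentElem e ∧ ∀ x ∈ s, ∃ r : R, x = e * r * e

section KAux

variable {R : Type*} [NonUnitalRing R]

private lemma pairSub_iff' (a b c : R) :
    PairSub a b c ↔ ∃ p q r s : R, p*c*r = a ∧ p*c*s = 0 ∧ q*c*r = 0 ∧ q*c*s = b := by
  constructor
  · rintro ⟨α, β, hαβ⟩
    have h : ∀ i j, (!![a,0;0,b] : Matrix (Fin 2) (Fin 2) R) i j = α i 0 * c * β 0 j := by
      intro i j
      rw [hαβ]
      simp [Matrix.mul_apply, Fin.sum_univ_one]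
    refine ⟨α 0 0, α 1 0, β 0 0, β 0 1, ?_, ?_, ?_, ?_⟩
    · simpa using (h 0 0).symm
    · simpa using (h 0 1).symm
    · simpa using (h 1 0).symm
    · simpa using (h 1 1).symm
  · rintro ⟨p, q, r, s, h1, h2, h3, h4⟩
    refine ⟨!![p;q], !![r,s], ?_⟩
    ext i j
    fin_cases i <;> fin_cases j <;>
      simp [Matrix.mul_apply, Fin.sum_univ_one, h1, h2, h3, h4]

private lemma mem_KSet_iff' (a x : R) :
    x ∈ KSet a ↔ ∃ p q r s : R, p*a*r = a ∧ p*a*s = 0 ∧ q*a*r = 0 ∧ q*a*s = x :=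
  pairSub_iff' a x a

private lemma masc (p q x r s : R) : p*q*x*(r*s) = p*(q*x*r)*s := by
  simp only [mul_assoc]

private lemma mascl (p q x r : R) : p*q*x*r = p*(q*x*r) := by
  simp only [mul_assoc]

private lemma mascr (p x r s : R) : p*x*(r*s) = p*x*r*s := by
  simp only [mul_assoc]

private lemma KSet.zero_mem' (hR : IsSUnitalRing R) (a : R) : (0:R) ∈ KSet a := by
  obtain ⟨⟨u, hu⟩, ⟨v, hv⟩⟩ := hR a
  exact (mem_KSet_iff' a 0).2 ⟨u, 0, v, 0, by rw [hu, hv], by rw [mul_zero],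
    by rw [zero_mul, zero_mul], by rw [mul_zero]⟩

private lemma KSet.add_mem' {a x y : R} (hx : x ∈ KSet a) (hy : y ∈ KSet a) :
    x + y ∈ KSet a := by
  obtain ⟨p, q, r, s, h1, h2, h3, h4⟩ := (mem_KSet_iff' a x).1 hx
  obtain ⟨p', q', r', s', g1, g2, g3, g4⟩ := (mem_KSet_iff' a y).1 hy
  refine (mem_KSet_iff' a (x+y)).2 ⟨p*p', q*p' + q', r'*r, r'*s + s', ?_, ?_, ?_, ?_⟩
  · rw [masc, g1, h1]
  · rw [mul_add, masc, g1, h2, mascl p p' a s', g2, mul_zero, add_zero]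
  · rw [add_mul, add_mul, masc, g1, h3, mascr, g3, zero_mul, add_zero]
  · rw [add_mul, add_mul, mul_add, mul_add, masc, g1, h4, mascl q p' a s', g2, mul_zero,
      add_zero, mascr q' a r' s, g3, zero_mul, zero_add, g4]

private lemma KSet.neg_mem' {a x : R} (hx : x ∈ KSet a) : -x ∈ KSet a := by
  obtain ⟨p, q, r, s, h1, h2, h3, h4⟩ := (mem_KSet_iff' a x).1 hx
  exact (mem_KSet_iff' a (-x)).2 ⟨p, -q, r, s, h1, h2,
    by rw [neg_mul, neg_mul, h3, neg_zero], by rw [neg_mul, neg_mul, h4]⟩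

private lemma KSet.mul_mem_left' {a x : R} (r₀ : R) (hx : x ∈ KSet a) :
    r₀ * x ∈ KSet a := by
  obtain ⟨p, q, r, s, h1, h2, h3, h4⟩ := (mem_KSet_iff' a x).1 hx
  exact (mem_KSet_iff' a (r₀*x)).2 ⟨p, r₀*q, r, s, h1, h2,
    by rw [mascl r₀ q a r, h3, mul_zero], by rw [mascl r₀ q a s, h4]⟩

private lemma KSet.mul_mem_right' {a x : R} (r₀ : R) (hx : x ∈ KSet a) :
    x * r₀ ∈ KSet a := by
  obtain ⟨p, q, r, s, h1, h2, h3, h4⟩ := (mem_KSet_iff' a x).1 hx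
  exact (mem_KSet_iff' a (x*r₀)).2 ⟨p, q, r, s*r₀,
    h1, by rw [mascr p a s r₀, h2, zero_mul], h3, by rw [mascr q a s r₀, h4]⟩

private lemma orth_family (hR : IsSUnitalRing R) (a : R) :
    ∀ (n : ℕ) (k : Fin n → R), (∀ i, k i ∈ KSet a) →
    ∃ (S T : R) (c d : Fin n → R), S*a*T = a ∧ (∀ i, S*a*(d i) = 0) ∧
      (∀ i, (c i)*a*T = 0) ∧ (∀ i, (c i)*a*(d i) = k i) ∧
      (∀ i j, i ≠ j → (c i)*a*(d j) = 0) := by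
  intro n
  induction n with
  | zero =>
    intro k _
    obtain ⟨⟨u, hu⟩, ⟨v, hv⟩⟩ := hR a
    exact ⟨u, v, ![], ![], by rw [hu, hv], fun i => i.elim0, fun i => i.elim0,
      fun i => i.elim0, fun i => i.elim0⟩
  | succ n ih =>
    intro k hk
    obtain ⟨S, T, c, d, h1, h2, h3, h4, h5⟩ :=
      ih (fun i => k i.castSucc) (fun i => hk _)
    obtain ⟨γ1, γ2, δ1, δ2, g1, g2, g3, g4⟩ := (mem_KSet_iff' a _).1 (hk (Fin.last n))
    refine ⟨S*γ1, δ1*T, Fin.snoc (fun i => c i * γ1) γ2,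
      Fin.snoc (fun i => δ1 * d i) δ2, ?_, ?_, ?_, ?_, ?_⟩
    · rw [masc, g1, h1]
    · intro i
      induction i using Fin.lastCases with
      | last => rw [Fin.snoc_last, mascl, g2, mul_zero]
      | cast i => rw [Fin.snoc_castSucc, masc, g1, h2]
    · intro i
      induction i using Fin.lastCases with
      | last => rw [Fin.snoc_last, mascr, g3, zero_mul]
      | cast i => rw [Fin.snoc_castSucc, masc, g1, h3]
    · intro i
      induction i using Fin.lastCases with
      | last => rw [Fin.snoc_last, Fin.snoc_last, g4]
      | cast i => rw [Fin.snoc_castSucc, Fin.snoc_castSucc, masc, g1, h4]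
    · intro i j hij
      induction i using Fin.lastCases with
      | last =>
        induction j using Fin.lastCases with
        | last => exact absurd rfl hij
        | cast j => rw [Fin.snoc_last, Fin.snoc_castSucc, mascr, g3, zero_mul]
      | cast i =>
        induction j using Fin.lastCases with
        | last => rw [Fin.snoc_castSucc, Fin.snoc_last, mascl, g2, mul_zero]
        | cast j =>
          rw [Fin.snoc_castSucc, Fin.snoc_castSucc, masc, g1]
          exact h5 i j (fun h => hij (by rw [h]))

private lemma expand9 (p1 p2 p3 x q1 q2 q3 : R) :
    (p1 + p2 - p3) * x * (q1 + q2 + q3) =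
      p1*x*q1 + p1*x*q2 + p1*x*q3 + p2*x*q1 + p2*x*q2 + p2*x*q3
        - p3*x*q1 - p3*x*q2 - p3*x*q3 := by
  simp only [add_mul, sub_mul, mul_add]
  abel

private lemma absorb (hR : IsSUnitalRing R) (a x p q r s : R)
    (k0 : a - p*a*r ∈ KSet a) (k1 : p*a*s ∈ KSet a) (k2 : q*a*r ∈ KSet a)
    (k3 : x - q*a*s ∈ KSet a) : x ∈ KSet a := by
  obtain ⟨S, T, c, d, hST, hSd, hcT, hdiag, hoff⟩ :=
    orth_family hR a 4 ![a - p*a*r, p*a*s, q*a*r, x - q*a*s]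
      (by intro i; fin_cases i <;> assumption)
  have hd0 : c 0 * a * d 0 = a - p*a*r := hdiag 0
  have hd1 : c 1 * a * d 1 = p*a*s := hdiag 1
  have hd2 : c 2 * a * d 2 = q*a*r := hdiag 2
  have hd3 : c 3 * a * d 3 = x - q*a*s := hdiag 3
  have eS : ∀ z w : R, z*S*a*(T*w) = z*a*w := fun z w => by rw [masc, hST]
  have eSd : ∀ (z : R) (i : Fin 4), z*S*a*(d i) = 0 := fun z i => by
    rw [mascl, hSd, mul_zero]
  have ecT : ∀ (i : Fin 4) (w : R), (c i)*a*(T*w) = 0 := fun i w => by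
    rw [mascr, hcT, zero_mul]
  refine (mem_KSet_iff' a x).2
    ⟨p*S + c 0 - c 1, q*S + c 3 - c 2, T*r + d 0 + d 2, T*s + d 3 + d 1, ?_, ?_, ?_, ?_⟩
  · rw [expand9, eS, eSd, eSd, ecT, hd0, hoff 0 2 (by decide), ecT,
      hoff 1 0 (by decide), hoff 1 2 (by decide)]
    abel
  · rw [expand9, eS, eSd, eSd, ecT, hoff 0 3 (by decide), hoff 0 1 (by decide), ecT,
      hoff 1 3 (by decide), hd1]
    abel
  · rw [expand9, eS, eSd, eSd, ecT, hoff 3 0 (by decide), hoff 3 2 (by decide), ecT,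
      hoff 2 0 (by decide), hd2]
    abel
  · rw [expand9, eS, eSd, eSd, ecT, hd3, hoff 3 1 (by decide), ecT,
      hoff 2 3 (by decide), hoff 2 1 (by decide)]
    abel

end KAux

/-- Corollary 2.9 (everyquotientfinite): a nonzero element `a` of an s-unital ring `R` is
properly infinite if and only if for every two-sided ideal `I` of `R`, the coset `a + I` is
either zero or infinite in `R/I`. -/
theorem properlyInfinite_iff_infinite_or_zero_in_every_quotient {R : Type*} [NonUnitalRing R]
    (hR : IsSUnitalRing R) (a : R) (ha : a ≠ 0) :
    IsProperlyInfiniteElem a ↔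
      ∀ I : TwoSidedIdeal R,
        (a : I.ringCon.Quotient) = 0 ∨ IsInfiniteElem (a : I.ringCon.Quotient) := by
  constructor
  · rintro ⟨-, hpi⟩ I
    by_cases hza : (a : I.ringCon.Quotient) = 0
    · exact Or.inl hza
    · right
      obtain ⟨p, q, r, s, h1, h2, h3, h4⟩ := (pairSub_iff' a a a).1 hpi
      refine ⟨(a : I.ringCon.Quotient), hza, (pairSub_iff' _ _ _).2
        ⟨(p : I.ringCon.Quotient), q, r, s, ?_, ?_, ?_, ?_⟩⟩
      · rw [← RingCon.coe_mul, ← RingCon.coe_mul, h1]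
      · rw [← RingCon.coe_mul, ← RingCon.coe_mul, h2, RingCon.coe_zero]
      · rw [← RingCon.coe_mul, ← RingCon.coe_mul, h3, RingCon.coe_zero]
      · rw [← RingCon.coe_mul, ← RingCon.coe_mul, h4]
  · intro h
    set I : TwoSidedIdeal R := TwoSidedIdeal.mk' (KSet a) (KSet.zero_mem' hR a)
      (fun hx hy => KSet.add_mem' hx hy) (fun hx => KSet.neg_mem' hx)
      (fun hx => KSet.mul_mem_left' _ hx) (fun hx => KSet.mul_mem_right' _ hx) with hI
    have memI : ∀ x : R, x ∈ I ↔ x ∈ KSet a := fun x => by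
      rw [hI]; exact TwoSidedIdeal.mem_mk' _ _ _ _ _ _ x
    rcases h I with hza | hinf
    · -- a ∈ K(a), i.e. a ⊕ a ≼ a
      have : I.ringCon a 0 := I.ringCon.eq.1 (by rw [hza, RingCon.coe_zero])
      have ha' : a ∈ KSet a := (memI a).1 ((TwoSidedIdeal.mem_iff I a).2 this)
      exact ⟨ha, ha'⟩
    · exfalso
      obtain ⟨xq, hxq0, hxq⟩ := hinf
      obtain ⟨P, Q, Rr, S, e1, e2, e3, e4⟩ := (pairSub_iff' _ _ _).1 hxq
      have surj : ∀ y : I.ringCon.Quotient, ∃ z : R, (z : I.ringCon.Quotient) = y :=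
        fun y => Quotient.exists_rep y
      obtain ⟨p, rfl⟩ := surj P
      obtain ⟨q, rfl⟩ := surj Q
      obtain ⟨r, rfl⟩ := surj Rr
      obtain ⟨s, rfl⟩ := surj S
      obtain ⟨x, rfl⟩ := surj xq
      have c1 : a - p*a*r ∈ KSet a := by
        have : I.ringCon (p*a*r) a := I.ringCon.eq.1 (by
          rw [← RingCon.coe_mul, ← RingCon.coe_mul] at e1; exact e1)
        have := (TwoSidedIdeal.rel_iff I _ _).1 this
        have := KSet.neg_mem' ((memI _).1 this)
        rwa [neg_sub] at this
      have c2 : p*a*s ∈ KSet a := by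
        have : I.ringCon (p*a*s) 0 := I.ringCon.eq.1 (by
          rw [RingCon.coe_mul, RingCon.coe_mul, e2, I.ringCon.coe_zero])
        have := (TwoSidedIdeal.rel_iff I _ _).1 this
        rw [sub_zero] at this
        exact (memI _).1 this
      have c3 : q*a*r ∈ KSet a := by
        have : I.ringCon (q*a*r) 0 := I.ringCon.eq.1 (by
          rw [RingCon.coe_mul, RingCon.coe_mul, e3, I.ringCon.coe_zero])
        have := (TwoSidedIdeal.rel_iff I _ _).1 this
        rw [sub_zero] at this
        exact (memI _).1 this
      have c4 : x - q*a*s ∈ KSet a := by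
        have : I.ringCon (q*a*s) x := I.ringCon.eq.1 (by
          rw [← RingCon.coe_mul, ← RingCon.coe_mul] at e4; exact e4)
        have := (TwoSidedIdeal.rel_iff I _ _).1 this
        have := KSet.neg_mem' ((memI _).1 this)
        rwa [neg_sub] at this
      have hx : x ∈ KSet a := absorb hR a x p q r s c1 c2 c3 c4
      apply hxq0
      have hx0 : I.ringCon x 0 :=
        (TwoSidedIdeal.rel_iff I x 0).2 (by rw [sub_zero]; exact (memI x).2 hx)
      calc (x : I.ringCon.Quotient) = ((0:R) : I.ringCon.Quotient) := I.ringCon.eq.2 hx0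
        _ = 0 := I.ringCon.coe_zero
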